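/- Let S_1 and S_2 be complex Hermitian 2×2 matrices. Then there exists a nonzero vector v ∈ ℂ² with v†S_1v = 0 and v†S_2v = 0 if and only if the following three conditions hold: det(S_1) ≤ 0, det(S_2) ≤ 0, and F_1(S_1, S_2) ≥ 0. -/

import Mathlib

open Matrix ComplexOrder

/-- `F₁(S₁, S₂) = det (S₁ · adj(S₂) − S₂ · adj(S₁))`. -/
noncomputable def F1 {n : ℕ} (S₁ S₂ : Matrix (Fin n) (Fin n) ℂ) : ℂ :=
  (S₁ * S₂.adjugate - S₂ * S₁.adjugate).det

/-!
Write a Hermitian `2 × 2` matrix as `!![a, b; conj b, c]` with `a c : ℝ`. Then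
`F1 S₁ S₂ = 4 det S₁ det S₂ - tr (S₁ adj S₂)²` is minus the discriminant of the real quadratic
`t ↦ det (S₁ - t S₂) = det S₁ - t tr (S₁ adj S₂) + t² det S₂`.

Completing the square, `a · v†Sv = |a v₀ + b v₁|² + det S · |v₁|²` (and symmetrically with `c`),
so a Hermitian matrix with a nonzero isotropic vector has `det ≤ 0`. A common isotropic vector of
`S₁, S₂` is isotropic for every `S₁ - t S₂`, so the quadratic above is nonpositive and `F1 ≥ 0`.

Conversely, if `c₂ ≠ 0`, replacing `S₁` by `S₁ - (c₁ / c₂) S₂` changes neither the common isotropic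
vectors nor `F1`, and makes `c₁ = 0`. In the chart `v = (1, z)` the isotropic vectors of `S₂` then
form the circle `|c₂ z + conj b₂|² = -det S₂` and those of `S₁` a line, and the line meets the
circle exactly when `F1 ≥ 0`.
-/

open ComplexConjugate
open Complex (normSq normSq_apply add_re add_im neg_re neg_im mul_re mul_im conj_re conj_im
  ofReal_re ofReal_im)

noncomputable def hermMatrix (a c : ℝ) (b : ℂ) : Matrix (Fin 2) (Fin 2) ℂ :=
  !![(a : ℂ), b; conj b, (c : ℂ)]

noncomputable def hermForm (a c : ℝ) (b : ℂ) (v : Fin 2 → ℂ) : ℝ :=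
  a * normSq (v 0) + 2 * (b * conj (v 0) * v 1).re + c * normSq (v 1)

noncomputable def hermDet (a c : ℝ) (b : ℂ) : ℝ :=
  a * c - normSq b

noncomputable def hermPairing (a₁ c₁ : ℝ) (b₁ : ℂ) (a₂ c₂ : ℝ) (b₂ : ℂ) : ℝ :=
  a₁ * c₂ + a₂ * c₁ - 2 * (b₁ * conj b₂).re

theorem Matrix.IsHermitian.eq_hermMatrix {S : Matrix (Fin 2) (Fin 2) ℂ} (hS : S.IsHermitian) :
    S = hermMatrix (S 0 0).re (S 1 1).re (S 0 1) := by
  ext i j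
  fin_cases i <;> fin_cases j
  · exact (Complex.conj_eq_iff_re.1 (hS.apply 0 0)).symm
  · rfl
  · exact (hS.apply 1 0).symm
  · exact (Complex.conj_eq_iff_re.1 (hS.apply 1 1)).symm

theorem star_dotProduct_hermMatrix_mulVec (a c : ℝ) (b : ℂ) (v : Fin 2 → ℂ) :
    star v ⬝ᵥ hermMatrix a c b *ᵥ v = hermForm a c b v := by
  simp only [hermMatrix, hermForm, dotProduct, mulVec, Fin.sum_univ_two, of_apply, cons_val',
    cons_val_zero, cons_val_one, cons_val_fin_one, Pi.star_apply, RCLike.star_def, Complex.ext_iff,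
    normSq_apply, add_re, add_im, mul_re, mul_im, conj_re, conj_im, ofReal_re, ofReal_im]
  constructor <;> ring

theorem det_hermMatrix (a c : ℝ) (b : ℂ) : (hermMatrix a c b).det = hermDet a c b := by
  simp [hermMatrix, hermDet, det_fin_two, Complex.mul_conj]

theorem trace_hermMatrix_mul_adjugate (a₁ c₁ a₂ c₂ : ℝ) (b₁ b₂ : ℂ) :
    (hermMatrix a₁ c₁ b₁ * (hermMatrix a₂ c₂ b₂).adjugate).trace =
      hermPairing a₁ c₁ b₁ a₂ c₂ b₂ := by
  simp only [adjugate_fin_two, trace_fin_two, hermMatrix, hermPairing, mul_apply, Fin.sum_univ_two,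
    of_apply, cons_val', cons_val_zero, cons_val_one, cons_val_fin_one, Complex.ext_iff, add_re,
    add_im, neg_re, neg_im, mul_re, mul_im, conj_re, conj_im, ofReal_re, ofReal_im]
  constructor <;> ring

theorem F1_fin_two (A B : Matrix (Fin 2) (Fin 2) ℂ) :
    F1 A B = 4 * A.det * B.det - (A * B.adjugate).trace ^ 2 := by
  simp only [F1, adjugate_fin_two, det_fin_two, Matrix.sub_apply, mul_apply, of_apply, cons_val',
    cons_val_zero, cons_val_one, cons_val_fin_one, Fin.sum_univ_two, trace_fin_two]
  ring

theorem mul_hermForm_eq_normSq_add₀ (a c : ℝ) (b : ℂ) (v : Fin 2 → ℂ) :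
    a * hermForm a c b v = normSq (a * v 0 + b * v 1) + hermDet a c b * normSq (v 1) := by
  simp only [hermForm, hermDet, normSq_apply, add_re, add_im, mul_re, mul_im, conj_re, conj_im,
    ofReal_re, ofReal_im]
  ring

theorem mul_hermForm_eq_normSq_add₁ (a c : ℝ) (b : ℂ) (v : Fin 2 → ℂ) :
    c * hermForm a c b v = normSq (c * v 1 + conj b * v 0) + hermDet a c b * normSq (v 0) := by
  simp only [hermForm, hermDet, normSq_apply, add_re, add_im, mul_re, mul_im, conj_re, conj_im,
    ofReal_re, ofReal_im]
  ring

theorem hermForm_sub_mul (a₁ c₁ a₂ c₂ t : ℝ) (b₁ b₂ : ℂ) (v : Fin 2 → ℂ) :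
    hermForm (a₁ - t * a₂) (c₁ - t * c₂) (b₁ - t * b₂) v =
      hermForm a₁ c₁ b₁ v - t * hermForm a₂ c₂ b₂ v := by
  simp only [hermForm, sub_mul, Complex.sub_re, mul_assoc, Complex.re_ofReal_mul]
  ring

theorem hermDet_sub_mul (a₁ c₁ a₂ c₂ t : ℝ) (b₁ b₂ : ℂ) :
    hermDet (a₁ - t * a₂) (c₁ - t * c₂) (b₁ - t * b₂) =
      hermDet a₁ c₁ b₁ - t * hermPairing a₁ c₁ b₁ a₂ c₂ b₂ + t ^ 2 * hermDet a₂ c₂ b₂ := by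
  simp only [hermDet, hermPairing, Complex.normSq_sub, Complex.normSq_ofReal, map_mul,
    Complex.conj_ofReal, mul_left_comm b₁, Complex.re_ofReal_mul]
  ring

theorem hermPairing_sub_mul (a₁ c₁ a₂ c₂ t : ℝ) (b₁ b₂ : ℂ) :
    hermPairing (a₁ - t * a₂) (c₁ - t * c₂) (b₁ - t * b₂) a₂ c₂ b₂ =
      hermPairing a₁ c₁ b₁ a₂ c₂ b₂ - 2 * t * hermDet a₂ c₂ b₂ := by
  simp only [hermPairing, hermDet, sub_mul, Complex.sub_re, mul_assoc, Complex.re_ofReal_mul,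
    Complex.mul_conj, Complex.ofReal_re]
  ring

theorem hermPairing_comm (a₁ c₁ a₂ c₂ : ℝ) (b₁ b₂ : ℂ) :
    hermPairing a₂ c₂ b₂ a₁ c₁ b₁ = hermPairing a₁ c₁ b₁ a₂ c₂ b₂ := by
  rw [hermPairing, hermPairing, ← Complex.conj_re, map_mul, Complex.conj_conj, mul_comm (conj b₂)]
  ring

theorem hermDet_nonpos_of_hermForm_eq_zero {a c : ℝ} {b : ℂ} {v : Fin 2 → ℂ} (hv : v ≠ 0)
    (h : hermForm a c b v = 0) : hermDet a c b ≤ 0 := by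
  have h₀ := mul_hermForm_eq_normSq_add₀ a c b v
  have h₁ := mul_hermForm_eq_normSq_add₁ a c b v
  rw [h, mul_zero] at h₀ h₁
  obtain ⟨i, hi⟩ := Function.ne_iff.1 hv
  have hpos : 0 < normSq (v 0) + normSq (v 1) := by
    fin_cases i
    · exact add_pos_of_pos_of_nonneg (Complex.normSq_pos.2 hi) (Complex.normSq_nonneg _)
    · exact add_pos_of_nonneg_of_pos (Complex.normSq_nonneg _) (Complex.normSq_pos.2 hi)
  nlinarith [Complex.normSq_nonneg (a * v 0 + b * v 1),
    Complex.normSq_nonneg (c * v 1 + conj b * v 0)]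

theorem sq_hermPairing_le_of_hermForm_eq_zero {a₁ c₁ a₂ c₂ : ℝ} {b₁ b₂ : ℂ} {v : Fin 2 → ℂ}
    (hv : v ≠ 0) (h₁ : hermForm a₁ c₁ b₁ v = 0) (h₂ : hermForm a₂ c₂ b₂ v = 0) :
    hermPairing a₁ c₁ b₁ a₂ c₂ b₂ ^ 2 ≤ 4 * hermDet a₁ c₁ b₁ * hermDet a₂ c₂ b₂ := by
  have hpencil (t : ℝ) : hermDet a₂ c₂ b₂ * (t * t) + -hermPairing a₁ c₁ b₁ a₂ c₂ b₂ * t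
      + hermDet a₁ c₁ b₁ ≤ 0 := by
    have := hermDet_nonpos_of_hermForm_eq_zero hv
      (by rw [hermForm_sub_mul a₁ c₁ a₂ c₂ t, h₁, h₂, mul_zero, sub_zero])
    rw [hermDet_sub_mul] at this
    linarith
  have := discrim_le_zero_of_nonpos hpencil
  rw [discrim] at this
  linarith

theorem exists_normSq_eq_and_re_mul_eq {β : ℂ} {R k : ℝ} (hR : 0 ≤ R)
    (hk : k ^ 2 ≤ normSq β * R) : ∃ u : ℂ, normSq u = R ∧ (β * u).re = k := by
  rcases eq_or_ne β 0 with rfl | hβ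
  · have hk : k = 0 := by simpa using hk
    exact ⟨Real.sqrt R, by simp [Real.mul_self_sqrt hR], by simp [hk]⟩
  have hn : normSq β ≠ 0 := Complex.normSq_eq_zero.not.2 hβ
  set s := Real.sqrt (normSq β * R - k ^ 2)
  have hs : s ^ 2 = normSq β * R - k ^ 2 := Real.sq_sqrt (by linarith)
  have hβu : β * (conj β * (k + s * Complex.I) / normSq β) = k + s * Complex.I := by
    rw [mul_div_assoc', ← mul_assoc, Complex.mul_conj,
      mul_div_cancel_left₀ _ (by exact_mod_cast hn)]
  refine ⟨conj β * (k + s * Complex.I) / normSq β, ?_, by simp [hβu]⟩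
  rw [map_div₀, map_mul, Complex.normSq_conj, Complex.normSq_add_mul_I, Complex.normSq_ofReal]
  field_simp
  linarith

theorem exists_common_hermForm_zero_of_c₁_eq_zero {a₁ c₁ a₂ c₂ : ℝ} {b₁ b₂ : ℂ} (hc₁ : c₁ = 0)
    (hc₂ : c₂ ≠ 0) (hd₂ : hermDet a₂ c₂ b₂ ≤ 0)
    (hB : hermPairing a₁ c₁ b₁ a₂ c₂ b₂ ^ 2 ≤ 4 * hermDet a₁ c₁ b₁ * hermDet a₂ c₂ b₂) :
    ∃ v : Fin 2 → ℂ, v ≠ 0 ∧ hermForm a₁ c₁ b₁ v = 0 ∧ hermForm a₂ c₂ b₂ v = 0 := by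
  subst hc₁
  simp only [hermPairing, hermDet, mul_zero, add_zero, zero_sub] at hB
  obtain ⟨u, hu, hre⟩ := exists_normSq_eq_and_re_mul_eq (β := b₁) (R := -hermDet a₂ c₂ b₂)
    (k := -(a₁ * c₂ - 2 * (b₁ * conj b₂).re) / 2) (by linarith) (by rw [hermDet]; linarith)
  set z := (u - conj b₂) / c₂
  have hz : c₂ * z = u - conj b₂ := mul_div_cancel₀ _ (by exact_mod_cast hc₂)
  refine ⟨![1, z], by simp, ?_, ?_⟩
  · have : c₂ * hermForm a₁ 0 b₁ ![1, z] = a₁ * c₂ + 2 * (b₁ * (c₂ * z)).re := by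
      simp only [hermForm, cons_val_zero, cons_val_one, cons_val_fin_one, map_one, mul_one, zero_mul,
        add_zero, mul_left_comm b₁, Complex.re_ofReal_mul]
      ring
    rw [hz, mul_sub, Complex.sub_re, hre] at this
    exact (mul_eq_zero.1 (this.trans (by ring))).resolve_left hc₂
  · have := mul_hermForm_eq_normSq_add₁ a₂ c₂ b₂ ![1, z]
    simp only [cons_val_zero, cons_val_one, mul_one, map_one, hz,
      sub_add_cancel, hu] at this
    exact (mul_eq_zero.1 (this.trans (by ring))).resolve_left hc₂

theorem exists_common_hermForm_zero_of_c₂_ne_zero {a₁ c₁ a₂ c₂ : ℝ} {b₁ b₂ : ℂ}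
    (hc₂ : c₂ ≠ 0) (hd₂ : hermDet a₂ c₂ b₂ ≤ 0)
    (hB : hermPairing a₁ c₁ b₁ a₂ c₂ b₂ ^ 2 ≤ 4 * hermDet a₁ c₁ b₁ * hermDet a₂ c₂ b₂) :
    ∃ v : Fin 2 → ℂ, v ≠ 0 ∧ hermForm a₁ c₁ b₁ v = 0 ∧ hermForm a₂ c₂ b₂ v = 0 := by
  set t := c₁ / c₂
  obtain ⟨v, hv, h₁, h₂⟩ := exists_common_hermForm_zero_of_c₁_eq_zero
    (a₁ := a₁ - t * a₂) (c₁ := c₁ - t * c₂) (b₁ := b₁ - t * b₂)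
    (by simp [t, div_mul_cancel₀ _ hc₂]) hc₂ hd₂
    (by rw [hermPairing_sub_mul, hermDet_sub_mul]; linear_combination hB)
  refine ⟨v, hv, ?_, h₂⟩
  rwa [hermForm_sub_mul, h₂, mul_zero, sub_zero] at h₁

theorem exists_common_hermForm_zero_of_sq_hermPairing_le {a₁ c₁ a₂ c₂ : ℝ} {b₁ b₂ : ℂ}
    (hd₁ : hermDet a₁ c₁ b₁ ≤ 0) (hd₂ : hermDet a₂ c₂ b₂ ≤ 0)
    (hB : hermPairing a₁ c₁ b₁ a₂ c₂ b₂ ^ 2 ≤ 4 * hermDet a₁ c₁ b₁ * hermDet a₂ c₂ b₂) :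
    ∃ v : Fin 2 → ℂ, v ≠ 0 ∧ hermForm a₁ c₁ b₁ v = 0 ∧ hermForm a₂ c₂ b₂ v = 0 := by
  rcases ne_or_eq c₂ 0 with hc₂ | hc₂
  · exact exists_common_hermForm_zero_of_c₂_ne_zero hc₂ hd₂ hB
  rcases ne_or_eq c₁ 0 with hc₁ | hc₁
  · obtain ⟨v, hv, h₂, h₁⟩ := exists_common_hermForm_zero_of_c₂_ne_zero hc₁ hd₁
      (by rwa [hermPairing_comm, mul_right_comm])
    exact ⟨v, hv, h₁, h₂⟩
  · exact ⟨![0, 1], by simp, by simp [hermForm, hc₁], by simp [hermForm, hc₂]⟩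

theorem exists_common_hermForm_zero_iff (a₁ c₁ a₂ c₂ : ℝ) (b₁ b₂ : ℂ) :
    (∃ v : Fin 2 → ℂ, v ≠ 0 ∧ hermForm a₁ c₁ b₁ v = 0 ∧ hermForm a₂ c₂ b₂ v = 0) ↔
      hermDet a₁ c₁ b₁ ≤ 0 ∧ hermDet a₂ c₂ b₂ ≤ 0 ∧
        hermPairing a₁ c₁ b₁ a₂ c₂ b₂ ^ 2 ≤ 4 * hermDet a₁ c₁ b₁ * hermDet a₂ c₂ b₂ :=
  ⟨fun ⟨_, hv, h₁, h₂⟩ ↦ ⟨hermDet_nonpos_of_hermForm_eq_zero hv h₁,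
      hermDet_nonpos_of_hermForm_eq_zero hv h₂, sq_hermPairing_le_of_hermForm_eq_zero hv h₁ h₂⟩,
    fun ⟨hd₁, hd₂, hB⟩ ↦ exists_common_hermForm_zero_of_sq_hermPairing_le hd₁ hd₂ hB⟩

/-- For complex Hermitian `2 × 2` matrices `S₁, S₂`, there exists a nonzero vector
`v ∈ ℂ²` with `vᴴ S₁ v = 0` and `vᴴ S₂ v = 0` iff `det S₁ ≤ 0`, `det S₂ ≤ 0` and
`F₁(S₁, S₂) ≥ 0`. -/
theorem exists_common_isotropic_vector (S₁ S₂ : Matrix (Fin 2) (Fin 2) ℂ)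
    (h₁ : S₁.IsHermitian) (h₂ : S₂.IsHermitian) :
    (∃ v : Fin 2 → ℂ, v ≠ 0 ∧ star v ⬝ᵥ S₁ *ᵥ v = 0 ∧ star v ⬝ᵥ S₂ *ᵥ v = 0) ↔
      (S₁.det ≤ 0 ∧ S₂.det ≤ 0 ∧ 0 ≤ F1 S₁ S₂) := by
  rw [h₁.eq_hermMatrix, h₂.eq_hermMatrix, F1_fin_two, det_hermMatrix, det_hermMatrix,
    trace_hermMatrix_mul_adjugate]
  simp only [star_dotProduct_hermMatrix_mulVec, Complex.ofReal_eq_zero]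
  norm_cast
  rw [sub_nonneg]
  exact exists_common_hermForm_zero_iff _ _ _ _ _ _
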